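/- Let A be a quasitriangular bialgebra over a field F, B a right coideal subalgebra of A, (ψ, J, K) a cylindrical structure on (A, B) with tensor K-matrix 𝕂, and let g be an invertible element of A with ε(g) = 1. Then (Ad(g)∘ψ, (g⊗g)·J·Δ(g)⁻¹, g·K) is again a cylindrical structure on (A, B), where Ad(g)(a) = g·a·g⁻¹, and its tensor K-matrix equals (1⊗g)·𝕂. -/

import Mathlib

/-!
Every axiom transforms by conjugation with `g`. For the cocycle identity, write
`(Δ ⊗ id)(g ⊗ g) = (Δg)₁₂ g₃` and `(id ⊗ Δ)(g ⊗ g) = (Δg)₂₃ g₁`, where `g₃` commutes with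
`J₁₂` and `g₁` with `J₂₃`: both sides of the new identity become `(g ⊗ g ⊗ g)` times the old
ones times `Δ⁽²⁾(g⁻¹)`, equal by coassociativity. The counit conditions use `ε(g) = 1`, the
R-matrix relation uses `R Δ(g) = Δ^op(g) R`, and `(R^{Ad g ∘ ψ})₂₁ = (1 ⊗ g)(R^ψ)₂₁(1 ⊗ g⁻¹)`
gives the new tensor K-matrix `(1 ⊗ g) 𝕂`, which stays in `B ⊗ A`.
-/

open TensorProduct

noncomputable section

variable (F : Type*) [Field F]

section BialgDefs

variable (A : Type*) [Ring A] [Bialgebra F A]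

/-- Conjugation by an invertible element, as an algebra automorphism. -/
def conjEquiv (g gi : A) (h1 : g * gi = 1) (h2 : gi * g = 1) : A ≃ₐ[F] A where
  toFun a := g * a * gi
  invFun a := gi * a * g
  left_inv a := by simp only [← mul_assoc]; rw [h2, one_mul, mul_assoc, h2, mul_one]
  right_inv a := by simp only [← mul_assoc]; rw [h1, one_mul, mul_assoc, h1, mul_one]
  map_mul' a b := by
    show g * (a * b) * gi = (g * a * gi) * (g * b * gi)
    simp only [mul_assoc]; rw [← mul_assoc gi g, h2, one_mul]
  map_add' a b := by
    show g * (a + b) * gi = g * a * gi + g * b * gi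
    rw [mul_add, add_mul]
  commutes' r := by
    show g * algebraMap F A r * gi = algebraMap F A r
    rw [← Algebra.commutes r g, mul_assoc, h1, mul_one]

/-- The coproduct of `A`, as an algebra map. -/
def cop : A →ₐ[F] A ⊗[F] A := Bialgebra.comulAlgHom F A

/-- The flip of the two tensor legs. -/
def flipT : (A ⊗[F] A) ≃ₐ[F] A ⊗[F] A := Algebra.TensorProduct.comm F A A

/-- The opposite coproduct. -/
def copOp : A →ₐ[F] A ⊗[F] A := (flipT F A).toAlgHom.comp (cop F A)

/-- `X ↦ X₁₂` on triple tensors. -/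
def i12 : (A ⊗[F] A) →ₐ[F] A ⊗[F] (A ⊗[F] A) :=
  Algebra.TensorProduct.map (AlgHom.id F A) Algebra.TensorProduct.includeLeft

/-- `X ↦ X₁₃` on triple tensors. -/
def i13 : (A ⊗[F] A) →ₐ[F] A ⊗[F] (A ⊗[F] A) :=
  Algebra.TensorProduct.map (AlgHom.id F A) Algebra.TensorProduct.includeRight

/-- `X ↦ X₂₃` on triple tensors. -/
def i23 : (A ⊗[F] A) →ₐ[F] A ⊗[F] (A ⊗[F] A) :=
  Algebra.TensorProduct.includeRight

/-- `Δ ⊗ id` landing in `A ⊗ (A ⊗ A)`. -/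
def cop12 : (A ⊗[F] A) →ₐ[F] A ⊗[F] (A ⊗[F] A) :=
  (Algebra.TensorProduct.assoc F F F A A A).toAlgHom.comp
    (Algebra.TensorProduct.map (cop F A) (AlgHom.id F A))

/-- `id ⊗ Δ`. -/
def cop23 : (A ⊗[F] A) →ₐ[F] A ⊗[F] (A ⊗[F] A) :=
  Algebra.TensorProduct.map (AlgHom.id F A) (cop F A)

/-- `ε ⊗ id`. -/
def counit2l : (A ⊗[F] A) →ₐ[F] A :=
  (Algebra.TensorProduct.lid F A).toAlgHom.comp
    (Algebra.TensorProduct.map (Bialgebra.counitAlgHom F A) (AlgHom.id F A))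

/-- `id ⊗ ε`. -/
def counit2r : (A ⊗[F] A) →ₐ[F] A :=
  (Algebra.TensorProduct.rid F F A).toAlgHom.comp
    (Algebra.TensorProduct.map (AlgHom.id F A) (Bialgebra.counitAlgHom F A))

/-- `ψ ⊗ φ` on `A ⊗ A`. -/
def mapT (ψ φ : A →ₐ[F] A) : (A ⊗[F] A) →ₐ[F] A ⊗[F] A := Algebra.TensorProduct.map ψ φ

/-- `R^ψ = (ψ ⊗ id)(R)`. -/
def rpsi (R : A ⊗[F] A) (ψ : A ≃ₐ[F] A) : A ⊗[F] A :=
  Algebra.TensorProduct.map ψ.toAlgHom (AlgHom.id F A) R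

/-- `A` is quasitriangular with R-matrix `R` (with inverse `Ri`). -/
structure IsQT (R Ri : A ⊗[F] A) : Prop where
  mulInv : R * Ri = 1
  invMul : Ri * R = 1
  intw : ∀ a : A, R * cop F A a * Ri = copOp F A a
  copL : cop12 F A R = i13 F A R * i23 F A R
  copR : cop23 F A R = i13 F A R * i12 F A R

/-- `(ψ, J)` is a twist pair (with `Ji` the inverse of `J`). -/
structure IsTwistPair (R Ri J Ji : A ⊗[F] A) (ψ : A ≃ₐ[F] A) : Prop where
  mulInv : J * Ji = 1
  invMul : Ji * J = 1
  cocycle : i12 F A J * cop12 F A J = i23 F A J * cop23 F A J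
  counitL : counit2l F A J = 1
  counitR : counit2r F A J = 1
  intw : ∀ a : A,
    mapT F A ψ.toAlgHom ψ.toAlgHom (copOp F A (ψ.symm a)) = J * cop F A a * Ji
  rrel : flipT F A (mapT F A ψ.toAlgHom ψ.toAlgHom R) = flipT F A J * R * Ji

/-- The image of `s ⊗ A` inside `A ⊗ A`, for a subset `s ⊆ A`. -/
def legSpan (s : Set A) : Submodule F (A ⊗[F] A) :=
  Submodule.span F {x : A ⊗[F] A | ∃ b ∈ s, ∃ a : A, x = b ⊗ₜ[F] a}

/-- `B` is a right coideal subalgebra of `A`. -/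
def IsRightCoideal (B : Subalgebra F A) : Prop :=
  ∀ b ∈ B, cop F A b ∈ legSpan F A (B : Set A)

/-- The tensor K-matrix `𝕂 = (R^ψ)₂₁ ⬝ (1 ⊗ K) ⬝ R`. -/
def tenK (R : A ⊗[F] A) (ψ : A ≃ₐ[F] A) (K : A) : A ⊗[F] A :=
  flipT F A (rpsi F A R ψ) * ((1 : A) ⊗ₜ[F] K) * R

/-- `(ψ, J, K)` is a cylindrical structure on `(A, B)`. -/
structure IsCylindrical (R Ri : A ⊗[F] A) (B : Subalgebra F A) (J Ji : A ⊗[F] A)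
    (ψ : A ≃ₐ[F] A) (K Kinv : A) : Prop where
  twist : IsTwistPair F A R Ri J Ji ψ
  kMulInv : K * Kinv = 1
  kInvMul : Kinv * K = 1
  intwB : ∀ b ∈ B, K * b * Kinv = ψ b
  support : tenK F A R ψ K ∈ legSpan F A (B : Set A)
  copK : cop F A K = Ji * (((1 : A) ⊗ₜ[F] K) * (rpsi F A R ψ * (K ⊗ₜ[F] (1 : A))))

end BialgDefs

section ModuleDefs

variable (A : Type*) [Ring A] [Bialgebra F A]

/-- Right partial transpose on `End V ⊗ End W`. -/
def pt2 (V W : Type*) [AddCommGroup V] [Module F V] [AddCommGroup W] [Module F W] :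
    (Module.End F V ⊗[F] Module.End F W) →ₗ[F]
      (Module.End F V ⊗[F] Module.End F (Module.Dual F W)) :=
  TensorProduct.map LinearMap.id (Module.Dual.transpose (R := F) (M := W) (M' := W))

/-- Identification `End V ⊗ End (W^∨∨) ≃ End V ⊗ End W` via the canonical iso `W ≅ W^∨∨`. -/
def ddIdent (V W : Type*) [AddCommGroup V] [Module F V] [AddCommGroup W] [Module F W]
    [FiniteDimensional F W] :
    (Module.End F V ⊗[F] Module.End F (Module.Dual F (Module.Dual F W))) →ₗ[F]
      (Module.End F V ⊗[F] Module.End F W) :=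
  TensorProduct.map LinearMap.id ((Module.evalEquiv F W).conj.symm).toLinearMap

/-- The right partial trace `A ⊗ End V → A`. -/
def trace2 (V : Type*) [AddCommGroup V] [Module F V] :
    (A ⊗[F] Module.End F V) →ₗ[F] A :=
  (TensorProduct.rid F A).toLinearMap.comp
    (TensorProduct.map LinearMap.id (LinearMap.trace F V))

/-- `T_{•,V}`: act with the second leg on `V`. -/
def actRight (V : Type*) [AddCommGroup V] [Module F V] (ρV : A →ₐ[F] Module.End F V) :
    (A ⊗[F] A) →ₐ[F] A ⊗[F] Module.End F V :=
  Algebra.TensorProduct.map (AlgHom.id F A) ρV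

/-- The boundary transfer matrix `Tr₂(𝕂₍•,V₎)`. -/
def transfer (V : Type*) [AddCommGroup V] [Module F V] (ρV : A →ₐ[F] Module.End F V)
    (T : A ⊗[F] A) : A :=
  trace2 F A V (actRight F A V ρV T)

/-- The module structure on `V ⊗ W` obtained from `Δ`. -/
def tensorRep (V W : Type*) [AddCommGroup V] [Module F V] [AddCommGroup W] [Module F W]
    (ρV : A →ₐ[F] Module.End F V) (ρW : A →ₐ[F] Module.End F W) :
    A →ₐ[F] Module.End F (V ⊗[F] W) :=
  (Module.endTensorEndAlgHom (R := F) (S := F) (A := F) (M := V) (N := W)).comp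
    ((Algebra.TensorProduct.map ρV ρW).comp (cop F A))

/-- `g` (with inverse `gi`) is a boundary gauge transformation for the twist pair `(ψ, J)`. -/
def IsBoundaryGauge (R J : A ⊗[F] A) (ψ : A ≃ₐ[F] A) (g gi : A)
    (hg1 : g * gi = 1) (hg2 : gi * g = 1) : Prop :=
  ∀ (V W : Type) [AddCommGroup V] [Module F V] [FiniteDimensional F V]
    [AddCommGroup W] [Module F W] [FiniteDimensional F W]
    (ρV : A →ₐ[F] Module.End F V) (ρW : A →ₐ[F] Module.End F W),
    let X := pt2 F V W
      ((Algebra.TensorProduct.map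
        (ρV.comp (ψ.trans (conjEquiv F A g gi hg1 hg2)).toAlgHom) ρW) R)
    IsUnit X ∧ IsUnit (pt2 F V (Module.Dual F W) (Ring.inverse X)) ∧
      (Algebra.TensorProduct.map ρV ρW) ((g ⊗ₜ[F] g) * J * cop F A gi) =
        ddIdent F V W (Ring.inverse (pt2 F V (Module.Dual F W) (Ring.inverse X)))

end ModuleDefs

section Gauge

variable {F} {A : Type*} [Ring A] [Bialgebra F A]

/-- The computation behind both sides of the cocycle identity for a gauged twist `G * J * d⁻¹`. -/
theorem map_mul_map_gauge {S T M N : Type*} [Monoid S] [Monoid T]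
    [FunLike M S T] [MonoidHomClass M S T] [FunLike N S T] [MonoidHomClass N S T]
    (ι : M) (κ : N) {G J d di : S} {c : T} (hd : di * d = 1) (hc : Commute c (ι J))
    (hκ : κ G = ι d * c) :
    ι (G * J * di) * κ (G * J * di) = ι G * c * (ι J * κ J) * κ di := by
  simp only [map_mul, hκ, mul_assoc]
  rw [← mul_assoc (ι di), ← map_mul, hd, map_one, one_mul, ← mul_assoc (ι J), ← hc.eq,
    mul_assoc]

theorem cop12_cop (x : A) : cop12 F A (cop F A x) = cop23 F A (cop F A x) :=
  Coalgebra.coassoc_apply x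

theorem counit2l_cop (x : A) : counit2l F A (cop F A x) = x :=
  (congrArg (TensorProduct.lid F A) (Coalgebra.rTensor_counit_comul x)).trans (by simp)

theorem counit2r_cop (x : A) : counit2r F A (cop F A x) = x :=
  (congrArg (TensorProduct.rid F A) (Coalgebra.lTensor_counit_comul x)).trans (by simp)

theorem counit2l_tmul (x y : A) : counit2l F A (x ⊗ₜ y) = Bialgebra.counitAlgHom F A x • y := by
  simp [counit2l]

theorem counit2r_tmul (x y : A) : counit2r F A (x ⊗ₜ y) = Bialgebra.counitAlgHom F A y • x := by
  simp [counit2r]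

theorem flipT_tmul (x y : A) : flipT F A (x ⊗ₜ y) = y ⊗ₜ x := rfl

theorem copOp_apply (a : A) : copOp F A a = flipT F A (cop F A a) := rfl

theorem i12_tmul (x y : A) : i12 F A (x ⊗ₜ y) = x ⊗ₜ (y ⊗ₜ 1) := rfl

theorem i23_eq_one_tmul (z : A ⊗[F] A) : i23 F A z = 1 ⊗ₜ z := rfl

theorem assoc_comp_includeLeft :
    (Algebra.TensorProduct.assoc F F F A A A).toAlgHom.comp Algebra.TensorProduct.includeLeft =
      i12 F A := by
  ext : 1 <;> ext <;> simp [i12, Algebra.TensorProduct.one_def]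

theorem cop12_tmul (x y : A) :
    cop12 F A (x ⊗ₜ y) = i12 F A (cop F A x) * (1 ⊗ₜ (1 ⊗ₜ y)) := by
  rw [← mul_one x, ← one_mul y, ← Algebra.TensorProduct.tmul_mul_tmul, map_mul,
    ← assoc_comp_includeLeft]
  simp [cop12, Algebra.TensorProduct.one_def]

theorem cop23_tmul (x y : A) : cop23 F A (x ⊗ₜ y) = i23 F A (cop F A y) * (x ⊗ₜ 1) := by
  simp [cop23, i23_eq_one_tmul]

theorem commute_one_tmul_one_tmul_i12 (c : A) (z : A ⊗[F] A) :
    Commute (1 ⊗ₜ (1 ⊗ₜ c) : A ⊗[F] (A ⊗[F] A)) (i12 F A z) := by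
  induction z using TensorProduct.induction_on with
  | zero => simp
  | tmul a b => simp [Commute, SemiconjBy, i12_tmul]
  | add u v hu hv => rw [map_add]; exact hu.add_right hv

theorem commute_tmul_one_i23 (c : A) (z : A ⊗[F] A) :
    Commute (c ⊗ₜ 1 : A ⊗[F] (A ⊗[F] A)) (i23 F A z) := by
  simp [Commute, SemiconjBy, i23_eq_one_tmul]

variable {g gi : A}

theorem conjEquiv_apply (hg1 : g * gi = 1) (hg2 : gi * g = 1) (a : A) :
    conjEquiv F A g gi hg1 hg2 a = g * a * gi := rfl

theorem conjEquiv_symm_apply (hg1 : g * gi = 1) (hg2 : gi * g = 1) (a : A) :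
    (conjEquiv F A g gi hg1 hg2).symm a = gi * a * g := rfl

theorem mapT_trans_conjEquiv (hg1 : g * gi = 1) (hg2 : gi * g = 1) (ψ : A ≃ₐ[F] A)
    (z : A ⊗[F] A) :
    mapT F A (ψ.trans (conjEquiv F A g gi hg1 hg2)).toAlgHom
        (ψ.trans (conjEquiv F A g gi hg1 hg2)).toAlgHom z =
      (g ⊗ₜ g) * mapT F A ψ.toAlgHom ψ.toAlgHom z * (gi ⊗ₜ gi) := by
  induction z using TensorProduct.induction_on with
  | zero => simp
  | tmul a b => simp [mapT, conjEquiv_apply]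
  | add u v hu hv => rw [map_add, hu, hv, map_add, mul_add, add_mul]

theorem rpsi_trans_conjEquiv (hg1 : g * gi = 1) (hg2 : gi * g = 1) (R : A ⊗[F] A)
    (ψ : A ≃ₐ[F] A) :
    rpsi F A R (ψ.trans (conjEquiv F A g gi hg1 hg2)) =
      (g ⊗ₜ 1) * rpsi F A R ψ * (gi ⊗ₜ 1) := by
  unfold rpsi
  induction R using TensorProduct.induction_on with
  | zero => simp
  | tmul a b => simp [conjEquiv_apply]
  | add u v hu hv => rw [map_add, hu, hv, map_add, mul_add, add_mul]

theorem tenK_trans_conjEquiv (hg1 : g * gi = 1) (hg2 : gi * g = 1) (R : A ⊗[F] A)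
    (ψ : A ≃ₐ[F] A) (K : A) :
    tenK F A R (ψ.trans (conjEquiv F A g gi hg1 hg2)) (g * K) = (1 ⊗ₜ g) * tenK F A R ψ K := by
  have hflip : ∀ x : A, flipT F A (x ⊗ₜ 1) = 1 ⊗ₜ x := fun _ => rfl
  have hcancel : (1 ⊗ₜ gi) * (1 ⊗ₜ (g * K)) = (1 ⊗ₜ K : A ⊗[F] A) := by
    rw [Algebra.TensorProduct.tmul_mul_tmul, one_mul, ← mul_assoc, hg2, one_mul]
  simp only [tenK, rpsi_trans_conjEquiv, map_mul, hflip, mul_assoc]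
  rw [← mul_assoc (1 ⊗ₜ gi), hcancel]

theorem IsQT.mul_cop {R Ri : A ⊗[F] A} (hQT : IsQT F A R Ri) (a : A) :
    R * cop F A a = copOp F A a * R := by
  rw [← hQT.intw a, mul_assoc _ Ri, hQT.invMul, mul_one]

theorem cocycle_gauge (hg2 : gi * g = 1) {J : A ⊗[F] A}
    (hJ : i12 F A J * cop12 F A J = i23 F A J * cop23 F A J) :
    i12 F A ((g ⊗ₜ g) * J * cop F A gi) * cop12 F A ((g ⊗ₜ g) * J * cop F A gi) =
      i23 F A ((g ⊗ₜ g) * J * cop F A gi) * cop23 F A ((g ⊗ₜ g) * J * cop F A gi) := by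
  have hd : cop F A gi * cop F A g = 1 := by rw [← map_mul, hg2, map_one]
  have h12 : i12 F A (g ⊗ₜ g) * (1 ⊗ₜ (1 ⊗ₜ g)) = g ⊗ₜ (g ⊗ₜ g) := by simp [i12_tmul]
  have h23 : i23 F A (g ⊗ₜ g) * (g ⊗ₜ 1) = g ⊗ₜ (g ⊗ₜ g) := by simp [i23_eq_one_tmul]
  rw [map_mul_map_gauge (i12 F A) (cop12 F A) hd
      (commute_one_tmul_one_tmul_i12 g J) (cop12_tmul g g),
    map_mul_map_gauge (i23 F A) (cop23 F A) hd
      (commute_tmul_one_i23 g J) (cop23_tmul g g), h12, h23, hJ, cop12_cop]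

theorem IsTwistPair.gauge {R Ri J Ji : A ⊗[F] A} {ψ : A ≃ₐ[F] A} (hQT : IsQT F A R Ri)
    (hJ : IsTwistPair F A R Ri J Ji ψ) (hg1 : g * gi = 1) (hg2 : gi * g = 1)
    (hge : Bialgebra.counitAlgHom F A g = 1) :
    IsTwistPair F A R Ri ((g ⊗ₜ g) * J * cop F A gi) (cop F A g * Ji * (gi ⊗ₜ gi))
      (ψ.trans (conjEquiv F A g gi hg1 hg2)) where
  mulInv := by
    simp only [mul_assoc]
    rw [← mul_assoc (cop F A gi), ← map_mul, hg2, map_one, one_mul, ← mul_assoc J, hJ.mulInv,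
      one_mul, Algebra.TensorProduct.tmul_mul_tmul, hg1, Algebra.TensorProduct.one_def]
  invMul := by
    simp only [mul_assoc]
    rw [← mul_assoc (gi ⊗ₜ gi), Algebra.TensorProduct.tmul_mul_tmul, hg2,
      ← Algebra.TensorProduct.one_def, one_mul, ← mul_assoc Ji, hJ.invMul, one_mul, ← map_mul,
      hg1, map_one]
  cocycle := cocycle_gauge hg2 hJ.cocycle
  counitL := by
    rw [map_mul, map_mul, counit2l_tmul, hge, one_smul, hJ.counitL, counit2l_cop, mul_one, hg1]
  counitR := by
    rw [map_mul, map_mul, counit2r_tmul, hge, one_smul, hJ.counitR, counit2r_cop, mul_one, hg1]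
  intw a := by
    rw [mapT_trans_conjEquiv, AlgEquiv.symm_trans_apply, conjEquiv_symm_apply,
      hJ.intw (gi * a * g)]
    simp only [map_mul, mul_assoc]
  rrel := by
    have hR : flipT F A (cop F A gi) * (R * cop F A g) = R := by
      rw [hQT.mul_cop, ← mul_assoc, copOp_apply, ← map_mul, ← map_mul, hg2, map_one, map_one,
        one_mul]
    rw [mapT_trans_conjEquiv]
    simp only [map_mul, hJ.rrel, flipT_tmul]
    simp only [mul_assoc]
    rw [← mul_assoc R (cop F A g), ← mul_assoc (flipT F A (cop F A gi)), hR]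

theorem one_tmul_mul_mem_legSpan (s : Set A) (c : A) {x : A ⊗[F] A} (hx : x ∈ legSpan F A s) :
    (1 ⊗ₜ c) * x ∈ legSpan F A s := by
  induction hx using Submodule.span_induction with
  | mem y hy =>
    obtain ⟨b, hb, a, rfl⟩ := hy
    rw [Algebra.TensorProduct.tmul_mul_tmul, one_mul]
    exact Submodule.subset_span ⟨b, hb, c * a, rfl⟩
  | zero => rw [mul_zero]; exact zero_mem _
  | add y z _ _ hy hz => rw [mul_add]; exact add_mem hy hz
  | smul r y _ hy => rw [mul_smul_comm]; exact Submodule.smul_mem _ r hy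

theorem IsCylindrical.gauge {R Ri J Ji : A ⊗[F] A} {B : Subalgebra F A} {ψ : A ≃ₐ[F] A}
    {K Kinv : A} (hQT : IsQT F A R Ri) (hcyl : IsCylindrical F A R Ri B J Ji ψ K Kinv)
    (hg1 : g * gi = 1) (hg2 : gi * g = 1) (hge : Bialgebra.counitAlgHom F A g = 1) :
    IsCylindrical F A R Ri B ((g ⊗ₜ g) * J * cop F A gi) (cop F A g * Ji * (gi ⊗ₜ gi))
      (ψ.trans (conjEquiv F A g gi hg1 hg2)) (g * K) (Kinv * gi) where
  twist := hcyl.twist.gauge hQT hg1 hg2 hge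
  kMulInv := by rw [mul_assoc, ← mul_assoc K, hcyl.kMulInv, one_mul, hg1]
  kInvMul := by rw [mul_assoc, ← mul_assoc gi, hg2, one_mul, hcyl.kInvMul]
  intwB b hb := by
    rw [AlgEquiv.trans_apply, conjEquiv_apply, ← hcyl.intwB b hb]
    simp only [mul_assoc]
  support := by
    rw [tenK_trans_conjEquiv]
    exact one_tmul_mul_mem_legSpan _ g hcyl.support
  copK := by
    have hgiK : gi * (g * K) = K := by rw [← mul_assoc, hg2, one_mul]
    have hleft : (gi ⊗ₜ gi) * ((1 ⊗ₜ (g * K)) * (g ⊗ₜ 1)) = (1 ⊗ₜ K : A ⊗[F] A) := by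
      simp only [Algebra.TensorProduct.tmul_mul_tmul, one_mul, mul_one, hgiK, hg2]
    have hright : (gi ⊗ₜ 1) * ((g * K) ⊗ₜ 1) = (K ⊗ₜ 1 : A ⊗[F] A) := by
      rw [Algebra.TensorProduct.tmul_mul_tmul, hgiK, one_mul]
    rw [map_mul, hcyl.copK, rpsi_trans_conjEquiv, ← hleft, ← hright]
    simp only [mul_assoc]

end Gauge

theorem statement6_general {F A : Type*} [Field F] [Ring A] [Bialgebra F A]
    (R Ri : A ⊗[F] A) (hQT : IsQT F A R Ri)
    (B : Subalgebra F A)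
    (J Ji : A ⊗[F] A) (ψ : A ≃ₐ[F] A) (K Kinv : A)
    (hcyl : IsCylindrical F A R Ri B J Ji ψ K Kinv)
    (g gi : A) (hg1 : g * gi = 1) (hg2 : gi * g = 1)
    (hge : Bialgebra.counitAlgHom F A g = 1) :
    IsCylindrical F A R Ri B ((g ⊗ₜ[F] g) * J * cop F A gi)
      (cop F A g * Ji * (gi ⊗ₜ[F] gi))
      (ψ.trans (conjEquiv F A g gi hg1 hg2)) (g * K) (Kinv * gi) ∧
    tenK F A R (ψ.trans (conjEquiv F A g gi hg1 hg2)) (g * K) =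
      ((1 : A) ⊗ₜ[F] g) * tenK F A R ψ K :=
  ⟨hcyl.gauge hQT hg1 hg2 hge, tenK_trans_conjEquiv hg1 hg2 R ψ K⟩

/-- gauge transformation of a cylindrical structure by an invertible
element `g` with `ε(g) = 1` is again a cylindrical structure, with tensor K-matrix
`(1 ⊗ g) ⬝ 𝕂`. -/
theorem statement6 {F A : Type*} [Field F] [Ring A] [Bialgebra F A]
    (R Ri : A ⊗[F] A) (hQT : IsQT F A R Ri)
    (B : Subalgebra F A) (hB : IsRightCoideal F A B)
    (J Ji : A ⊗[F] A) (ψ : A ≃ₐ[F] A) (K Kinv : A)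
    (hcyl : IsCylindrical F A R Ri B J Ji ψ K Kinv)
    (g gi : A) (hg1 : g * gi = 1) (hg2 : gi * g = 1)
    (hge : Bialgebra.counitAlgHom F A g = 1) :
    IsCylindrical F A R Ri B ((g ⊗ₜ[F] g) * J * cop F A gi)
      (cop F A g * Ji * (gi ⊗ₜ[F] gi))
      (ψ.trans (conjEquiv F A g gi hg1 hg2)) (g * K) (Kinv * gi) ∧
    tenK F A R (ψ.trans (conjEquiv F A g gi hg1 hg2)) (g * K) =
      ((1 : A) ⊗ₜ[F] g) * tenK F A R ψ K :=
  statement6_general R Ri hQT B J Ji ψ K Kinv hcyl g gi hg1 hg2 hge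

end
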